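/- Let p be a prime with 4 dividing p−1, let λ be an element of order 4 in (ℤ/pℤ)ˣ, and let k ∈ ℤ/pℤ. Then the assignment a ↦ a⁻¹, b ↦ b⁻¹, c ↦ c extends to an automorphism σ of G_2(p) satisfying σ(R_{4,k}) = (R_{4,1+λ−k})⁻¹; consequently σ(S_{4,k}) = S_{4,1+λ−k} and the Cayley graphs Cay(G_2(p), S_{4,k}) and Cay(G_2(p), S_{4,1+λ−k}) are isomorphic. -/

import Mathlib

/-!
In the coordinates `a^x b^y c^z` of `G₂(p)` one has
`(a^x b^y c^z)⁻¹ = a^(-x) b^(-y) c^(-z-xy)`, since `a^x b^y = b^y a^x c^(xy)` with `c` central.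
The relations survive `a ↦ a⁻¹, b ↦ b⁻¹, c ↦ c` because `[a⁻¹, b⁻¹] = c` again, and the resulting
involutive automorphism sends `a^x b^y c^z` to `a^(-x) b^(-y) c^z`, which is the inverse of
`a^x b^y c^z'` exactly when `z + z' + xy = 0`. For the two elements of `R_{4,k}` outside `{a, b}`,
paired with the corresponding elements of `R_{4,1+λ-k}`, this condition is `λ² + 1 = 0`, true
because `λ` has order `4` in the field `ℤ/pℤ`. Finally, an automorphism carrying `S` onto `T`
is an isomorphism `Cay(G, S) ≅ Cay(G, T)`.
-/

/-- The Cayley graph of a group `G` with respect to a subset `S`: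
vertices are the elements of `G`, and `x`, `y` are adjacent iff `y * x⁻¹ ∈ S`
(symmetrized; when `S = S⁻¹` and `1 ∉ S` this is the usual Cayley graph). -/
def Cay (G : Type*) [Group G] (S : Set G) : SimpleGraph G where
  Adj x y := x ≠ y ∧ (y * x⁻¹ ∈ S ∨ x * y⁻¹ ∈ S)
  symm := ⟨fun x y h => ⟨h.1.symm, h.2.symm⟩⟩
  loopless := ⟨fun x h => h.1 rfl⟩

namespace SimpleGraph
variable {V : Type*} (Γ : SimpleGraph V)

/-- The automorphism group acts transitively on vertices. -/
def VertexTransitive : Prop := ∀ u v : V, ∃ f : Γ ≃g Γ, f u = v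

/-- The automorphism group acts transitively on (undirected) edges. -/
def EdgeTransitive : Prop :=
  ∀ e₁ ∈ Γ.edgeSet, ∀ e₂ ∈ Γ.edgeSet, ∃ f : Γ ≃g Γ, Sym2.map f e₁ = e₂

/-- The automorphism group acts transitively on arcs (ordered pairs of adjacent vertices). -/
def ArcTransitive : Prop :=
  ∀ u v x y : V, Γ.Adj u v → Γ.Adj x y → ∃ f : Γ ≃g Γ, f u = x ∧ f v = y

/-- A graph is half-arc-transitive if it is vertex- and edge- but not arc-transitive. -/
def HalfArcTransitive : Prop :=
  Γ.VertexTransitive ∧ Γ.EdgeTransitive ∧ ¬ Γ.ArcTransitive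

end SimpleGraph

/-- The right regular representation `Ĝ = {x ↦ x * g | g ∈ G}` as a subgroup of the
automorphism group of the Cayley graph `Cay G S`. -/
def rightRegular (G : Type*) [Group G] (S : Set G) :
    Subgroup ((Cay G S) ≃g (Cay G S)) where
  carrier := {f | ∃ g : G, ∀ x, f x = x * g}
  one_mem' := ⟨1, fun x => (mul_one x).symm⟩
  mul_mem' := by
    rintro f f' ⟨g, hg⟩ ⟨g', hg'⟩
    exact ⟨g' * g, fun x => by
      show f (f' x) = x * (g' * g)
      rw [hg', hg, mul_assoc]⟩
  inv_mem' := by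
    rintro f ⟨g, hg⟩
    refine ⟨g⁻¹, fun x => ?_⟩
    show f.symm x = x * g⁻¹
    have h1 : f (x * g⁻¹) = x := by rw [hg, inv_mul_cancel_right]
    have h2 : f.symm (f (x * g⁻¹)) = x * g⁻¹ := RelIso.symm_apply_apply f _
    rw [h1] at h2
    exact h2

/-- A Cayley graph is *normal* if the right regular representation is a normal subgroup
of its full automorphism group. -/
def CayleyNormal (G : Type*) [Group G] (S : Set G) : Prop :=
  (rightRegular G S).Normal

/-- `Aut(G, S)`: the group of automorphisms of `G` preserving the subset `S` setwise. -/
def autStab (G : Type*) [Group G] (S : Set G) : Subgroup (MulAut G) where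
  carrier := {α | α '' S = S}
  one_mem' := by simp
  mul_mem' := by
    intro α β hα hβ
    show (α * β) '' S = S
    have : ⇑(α * β) = ⇑α ∘ ⇑β := rfl
    rw [this, Set.image_comp, hβ, hα]
  inv_mem' := by
    intro α hα
    show ⇑α⁻¹ '' S = S
    conv_lhs => rw [← hα]
    rw [← Set.image_comp]
    have : ⇑α⁻¹ ∘ ⇑α = id := by
      funext x
      exact α.symm_apply_apply x
    rw [this, Set.image_id]

/-- The setoid on an index set identifying indices with isomorphic graphs. -/
def graphIsoSetoid {ι V : Type*} (F : ι → SimpleGraph V) : Setoid ι where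
  r k l := Nonempty (F k ≃g F l)
  iseqv := ⟨fun _ => ⟨RelIso.refl _⟩, fun ⟨f⟩ => ⟨f.symm⟩, fun ⟨f⟩ ⟨g⟩ => ⟨f.trans g⟩⟩
/-- Relations for the group `G₁(p) = ⟨a, b | a^(p²) = 1, b^p = 1, b⁻¹ a b = a^(1+p)⟩`. -/
def G1Rels (p : ℕ) : Set (FreeGroup (Fin 2)) :=
  {FreeGroup.of 0 ^ (p ^ 2), FreeGroup.of 1 ^ p,
    (FreeGroup.of 1)⁻¹ * FreeGroup.of 0 * FreeGroup.of 1 * (FreeGroup.of 0 ^ (1 + p))⁻¹}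

/-- The nonabelian metacyclic group of order `p³`. -/
abbrev G1 (p : ℕ) : Type := PresentedGroup (G1Rels p)

/-- The generator `a` of `G₁(p)`. -/
def a1 (p : ℕ) : G1 p := PresentedGroup.of 0

/-- The generator `b` of `G₁(p)`. -/
def b1 (p : ℕ) : G1 p := PresentedGroup.of 1

/-- The connection set `T^{j,k} = {b^k a^(e^i), (b^k a^(e^i))⁻¹ : 0 ≤ i ≤ j-1} ⊆ G₁(p)`,
where `e` is a unit of `ℤ/p²ℤ` (of order `j`). -/
def Tset (p : ℕ) (e : (ZMod (p ^ 2))ˣ) (j k : ℕ) : Set (G1 p) :=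
  ((fun i : ℕ => b1 p ^ k * a1 p ^ ((e ^ i : (ZMod (p ^ 2))ˣ) : ZMod (p ^ 2)).val) ''
      Set.Iio j) ∪
  ((fun i : ℕ => b1 p ^ k * a1 p ^ ((e ^ i : (ZMod (p ^ 2))ˣ) : ZMod (p ^ 2)).val) ''
      Set.Iio j)⁻¹

open scoped commutatorElement in
/-- Relations for the Heisenberg group
`G₂(p) = ⟨a, b, c | a^p = b^p = c^p = 1, [a,b] = c, [a,c] = [b,c] = 1⟩`. -/
def G2Rels (p : ℕ) : Set (FreeGroup (Fin 3)) :=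
  {FreeGroup.of 0 ^ p, FreeGroup.of 1 ^ p, FreeGroup.of 2 ^ p,
    ⁅FreeGroup.of (0 : Fin 3), FreeGroup.of 1⁆ * (FreeGroup.of 2)⁻¹,
    ⁅FreeGroup.of (0 : Fin 3), FreeGroup.of 2⁆, ⁅FreeGroup.of (1 : Fin 3), FreeGroup.of 2⁆}

/-- The nonabelian group of order `p³` and exponent `p`. -/
abbrev G2 (p : ℕ) : Type := PresentedGroup (G2Rels p)

/-- The generator `a` of `G₂(p)`. -/
def a2 (p : ℕ) : G2 p := PresentedGroup.of 0

/-- The generator `b` of `G₂(p)`. -/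
def b2 (p : ℕ) : G2 p := PresentedGroup.of 1

/-- The generator `c = [a,b]` of `G₂(p)`. -/
def c2 (p : ℕ) : G2 p := PresentedGroup.of 2

/-- Power of an element of `G₂(p)` by an exponent in `ℤ/pℤ` (well defined as every
element of `G₂(p)` has order dividing `p`). -/
def pw {p : ℕ} (x : G2 p) (n : ZMod p) : G2 p := x ^ n.val

/-- `R_{4,k} = {a, b, a^λ b^(λ-1) c^k, a^(-λ-1) b^(-λ) c^(1-k)} ⊆ G₂(p)`. -/
def R4 (p : ℕ) (lam k : ZMod p) : Set (G2 p) :=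
  {a2 p, b2 p,
    pw (a2 p) lam * pw (b2 p) (lam - 1) * pw (c2 p) k,
    pw (a2 p) (-lam - 1) * pw (b2 p) (-lam) * pw (c2 p) (1 - k)}

/-- `S_{4,k} = R_{4,k} ∪ R_{4,k}⁻¹ ⊆ G₂(p)`. -/
def S4 (p : ℕ) (lam k : ZMod p) : Set (G2 p) :=
  R4 p lam k ∪ (R4 p lam k)⁻¹

section

variable {G : Type*} [Group G]

theorem pow_mul_pow_eq_of_mul_eq {x y z : G} (h : x * y = y * x * z) (hxz : Commute x z)
    (hyz : Commute y z) (i j : ℕ) : x ^ i * y ^ j = y ^ j * x ^ i * z ^ (i * j) := by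
  have hx : SemiconjBy x (y ^ j) (y ^ j * z ^ j) := by
    rw [← hyz.mul_pow]
    refine SemiconjBy.pow_right ?_ j
    rw [SemiconjBy, h, mul_assoc, hxz.eq, mul_assoc]
  have hxi : SemiconjBy (x ^ i) (y ^ j) (y ^ j * z ^ (i * j)) := by
    induction i with
    | zero => simp [SemiconjBy]
    | succ i ih =>
      rw [pow_succ', add_one_mul, add_comm, pow_add, ← mul_assoc]
      exact (hx.mul_right (hxz.pow_right _)).mul_left ih
  rw [hxi.eq, mul_assoc, mul_assoc, ((hxz.pow_right _).pow_left i).eq]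

theorem pow_val_add {p : ℕ} [NeZero p] {x : G} (hx : x ^ p = 1) (m n : ZMod p) :
    x ^ (m + n).val = x ^ m.val * x ^ n.val := by
  rw [ZMod.val_add, ← pow_eq_pow_mod _ hx, pow_add]

theorem pow_val_neg {p : ℕ} [NeZero p] {x : G} (hx : x ^ p = 1) (m : ZMod p) :
    x ^ (-m).val = (x ^ m.val)⁻¹ :=
  eq_inv_of_mul_eq_one_left (by rw [← pow_val_add hx, neg_add_cancel, ZMod.val_zero, pow_zero])

theorem pow_val_mul {p : ℕ} [NeZero p] {x : G} (hx : x ^ p = 1) (m n : ZMod p) :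
    x ^ (m * n).val = x ^ (m.val * n.val) := by
  rw [ZMod.val_mul, ← pow_eq_pow_mod _ hx]

end

theorem sq_eq_neg_one_of_orderOf_eq_four {K : Type*} [CommRing K] [IsDomain K] {u : Kˣ}
    (hu : orderOf u = 4) : (u : K) ^ 2 = -1 := by
  have h : IsPrimitiveRoot (u : K) 4 := IsPrimitiveRoot.coe_units_iff.mpr (hu ▸ .orderOf u)
  exact (h.pow_of_dvd two_ne_zero (by norm_num)).eq_neg_one_of_two_right

def Cay.isoOfMulEquiv {G H : Type*} [Group G] [Group H] (σ : G ≃* H) {S : Set G} {T : Set H}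
    (h : σ '' S = T) : Cay G S ≃g Cay H T where
  toEquiv := σ.toEquiv
  map_rel_iff' {u v} := by
    simp only [Cay, ← h, MulEquiv.toEquiv_eq_coe, EquivLike.coe_coe, ne_eq,
      EmbeddingLike.apply_eq_iff_eq, ← map_inv, ← map_mul, σ.injective.mem_set_image]

section Heisenberg

open scoped commutatorElement

variable {p : ℕ}

theorem a2_pow_p : a2 p ^ p = 1 :=
  PresentedGroup.one_of_mem (x := FreeGroup.of 0 ^ p) (by simp [G2Rels])

theorem b2_pow_p : b2 p ^ p = 1 :=
  PresentedGroup.one_of_mem (x := FreeGroup.of 1 ^ p) (by simp [G2Rels])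

theorem c2_pow_p : c2 p ^ p = 1 :=
  PresentedGroup.one_of_mem (x := FreeGroup.of 2 ^ p) (by simp [G2Rels])

theorem commute_a2_c2 : Commute (a2 p) (c2 p) :=
  commutatorElement_eq_one_iff_commute.mp <|
    PresentedGroup.one_of_mem (x := ⁅FreeGroup.of (0 : Fin 3), FreeGroup.of 2⁆) (by simp [G2Rels])

theorem commute_b2_c2 : Commute (b2 p) (c2 p) :=
  commutatorElement_eq_one_iff_commute.mp <|
    PresentedGroup.one_of_mem (x := ⁅FreeGroup.of (1 : Fin 3), FreeGroup.of 2⁆) (by simp [G2Rels])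

theorem commutatorElement_a2_b2 : ⁅a2 p, b2 p⁆ = c2 p :=
  mul_inv_eq_one.mp <| PresentedGroup.one_of_mem
    (x := ⁅FreeGroup.of (0 : Fin 3), FreeGroup.of 1⁆ * (FreeGroup.of 2)⁻¹) (by simp [G2Rels])

theorem commute_c2 (g : G2 p) : Commute (c2 p) g := by
  refine (Subgroup.mem_centralizer_singleton_iff.mp ?_).symm
  refine PresentedGroup.generated_by _ _ (fun i => ?_) g
  rw [Subgroup.mem_centralizer_singleton_iff]
  fin_cases i
  exacts [commute_a2_c2.eq, commute_b2_c2.eq, rfl]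

theorem a2_mul_b2 : a2 p * b2 p = b2 p * a2 p * c2 p := by
  rw [← (commute_c2 _).eq, ← commutatorElement_a2_b2, commutatorElement_def]
  group

theorem commutatorElement_inv_a2_inv_b2 : ⁅(a2 p)⁻¹, (b2 p)⁻¹⁆ = c2 p := by
  rw [commutatorElement_def, inv_inv, inv_inv, mul_assoc, a2_mul_b2]
  group

theorem lift_inv_inv_eq_one_of_mem_G2Rels :
    ∀ r ∈ G2Rels p, FreeGroup.lift ![(a2 p)⁻¹, (b2 p)⁻¹, c2 p] r = 1 := by
  rintro r (rfl | rfl | rfl | rfl | rfl | rfl) <;>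
    simp only [map_pow, map_mul, map_inv, map_commutatorElement, FreeGroup.lift_apply_of]
  · simp [a2_pow_p]
  · simp [b2_pow_p]
  · exact c2_pow_p
  · simp [commutatorElement_inv_a2_inv_b2]
  · exact commutatorElement_eq_one_iff_commute.mpr commute_a2_c2.inv_left
  · exact commutatorElement_eq_one_iff_commute.mpr commute_b2_c2.inv_left

def invertABHom (p : ℕ) : G2 p →* G2 p := PresentedGroup.toGroup lift_inv_inv_eq_one_of_mem_G2Rels

theorem invertABHom_a2 : invertABHom p (a2 p) = (a2 p)⁻¹ := PresentedGroup.toGroup.of _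
theorem invertABHom_b2 : invertABHom p (b2 p) = (b2 p)⁻¹ := PresentedGroup.toGroup.of _
theorem invertABHom_c2 : invertABHom p (c2 p) = c2 p := PresentedGroup.toGroup.of _

theorem invertABHom_comp_self : (invertABHom p).comp (invertABHom p) = .id _ := by
  refine PresentedGroup.ext fun i => ?_
  fin_cases i
  · change invertABHom p (invertABHom p (a2 p)) = a2 p
    rw [invertABHom_a2, map_inv, invertABHom_a2, inv_inv]
  · change invertABHom p (invertABHom p (b2 p)) = b2 p
    rw [invertABHom_b2, map_inv, invertABHom_b2, inv_inv]
  · change invertABHom p (invertABHom p (c2 p)) = c2 p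
    rw [invertABHom_c2, invertABHom_c2]

def invertAB (p : ℕ) : MulAut (G2 p) :=
  (invertABHom p).toMulEquiv _ invertABHom_comp_self invertABHom_comp_self

theorem invertAB_a2 : invertAB p (a2 p) = (a2 p)⁻¹ := invertABHom_a2 (p := p)
theorem invertAB_b2 : invertAB p (b2 p) = (b2 p)⁻¹ := invertABHom_b2 (p := p)
theorem invertAB_c2 : invertAB p (c2 p) = c2 p := invertABHom_c2 (p := p)

def g2mk (x y z : ZMod p) : G2 p := pw (a2 p) x * pw (b2 p) y * pw (c2 p) z

theorem R4_eq_g2mk (lam k : ZMod p) :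
    R4 p lam k = {a2 p, b2 p, g2mk lam (lam - 1) k, g2mk (-lam - 1) (-lam) (1 - k)} :=
  rfl

variable [NeZero p]

theorem g2mk_inv (x y z : ZMod p) : (g2mk x y z)⁻¹ = g2mk (-x) (-y) (-z - x * y) := by
  have hc (n : ℕ) (g : G2 p) : Commute ((c2 p ^ n)⁻¹) g := ((commute_c2 g).pow_left n).inv_left
  have hswap := pow_mul_pow_eq_of_mul_eq (a2_mul_b2 (p := p)) commute_a2_c2 commute_b2_c2 x.val y.val
  simp only [g2mk, pw]
  rw [pow_val_neg a2_pow_p, pow_val_neg b2_pow_p, sub_eq_add_neg, pow_val_add c2_pow_p,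
    pow_val_neg c2_pow_p, pow_val_neg c2_pow_p, pow_val_mul c2_pow_p, mul_inv_rev, mul_inv_rev,
    (hc _ _).eq, ← mul_inv_rev, hswap, mul_inv_rev, mul_assoc, (hc _ _).eq]
  simp only [mul_inv_rev, mul_assoc]

theorem invertAB_g2mk (x y z : ZMod p) : invertAB p (g2mk x y z) = g2mk (-x) (-y) z := by
  simp only [g2mk, pw, map_mul, map_pow, invertAB_a2, invertAB_b2, invertAB_c2, inv_pow,
    pow_val_neg a2_pow_p, pow_val_neg b2_pow_p]

theorem invertAB_g2mk_eq_inv {x y z z' : ZMod p} (h : z + z' + x * y = 0) :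
    invertAB p (g2mk x y z) = (g2mk x y z')⁻¹ := by
  rw [invertAB_g2mk, g2mk_inv]
  congr
  linear_combination h

theorem image_invertAB_R4 {lam : ZMod p} (hlam : lam ^ 2 = -1) (k : ZMod p) :
    invertAB p '' R4 p lam k = (R4 p lam (1 + lam - k))⁻¹ := by
  have h₃ := invertAB_g2mk_eq_inv (x := lam) (y := lam - 1) (z := k) (z' := 1 + lam - k)
    (by linear_combination hlam)
  have h₄ := invertAB_g2mk_eq_inv (x := -lam - 1) (y := -lam) (z := 1 - k)
    (z' := 1 - (1 + lam - k)) (by linear_combination hlam)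
  simp only [R4_eq_g2mk, Set.image_insert_eq, Set.image_singleton, Set.inv_insert,
    Set.inv_singleton, invertAB_a2, invertAB_b2, h₃, h₄]

end Heisenberg

theorem statement12_general (p : ℕ) (hp : p.Prime)
    (lam : (ZMod p)ˣ) (hlam : orderOf lam = 4) (k : ZMod p) :
    ∃ σ : MulAut (G2 p),
      σ (a2 p) = (a2 p)⁻¹ ∧ σ (b2 p) = (b2 p)⁻¹ ∧ σ (c2 p) = c2 p ∧
      ⇑σ '' R4 p (lam : ZMod p) k = (R4 p (lam : ZMod p) (1 + (lam : ZMod p) - k))⁻¹ ∧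
      ⇑σ '' S4 p (lam : ZMod p) k = S4 p (lam : ZMod p) (1 + (lam : ZMod p) - k) ∧
      Nonempty (Cay (G2 p) (S4 p (lam : ZMod p) k) ≃g
        Cay (G2 p) (S4 p (lam : ZMod p) (1 + (lam : ZMod p) - k))) := by
  have : Fact p.Prime := ⟨hp⟩
  have hR := image_invertAB_R4 (sq_eq_neg_one_of_orderOf_eq_four hlam) k
  have hS : invertAB p '' S4 p lam k = S4 p lam (1 + lam - k) := by
    rw [S4, S4, Set.image_union, Set.image_inv, hR, inv_inv, Set.union_comm]
  exact ⟨invertAB p, invertAB_a2, invertAB_b2, invertAB_c2, hR, hS, ⟨Cay.isoOfMulEquiv _ hS⟩⟩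

/-- The assignment `a ↦ a⁻¹`, `b ↦ b⁻¹`, `c ↦ c` extends to an
automorphism `σ` of `G₂(p)` with `σ(R_{4,k}) = (R_{4,1+λ-k})⁻¹`; hence
`σ(S_{4,k}) = S_{4,1+λ-k}` and `Γ_{4,k} ≅ Γ_{4,1+λ-k}`. -/
theorem statement12 (p : ℕ) (hp : p.Prime) (hdvd : 4 ∣ p - 1)
    (lam : (ZMod p)ˣ) (hlam : orderOf lam = 4) (k : ZMod p) :
    ∃ σ : MulAut (G2 p),
      σ (a2 p) = (a2 p)⁻¹ ∧ σ (b2 p) = (b2 p)⁻¹ ∧ σ (c2 p) = c2 p ∧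
      ⇑σ '' R4 p (lam : ZMod p) k = (R4 p (lam : ZMod p) (1 + (lam : ZMod p) - k))⁻¹ ∧
      ⇑σ '' S4 p (lam : ZMod p) k = S4 p (lam : ZMod p) (1 + (lam : ZMod p) - k) ∧
      Nonempty (Cay (G2 p) (S4 p (lam : ZMod p) k) ≃g
        Cay (G2 p) (S4 p (lam : ZMod p) (1 + (lam : ZMod p) - k))) :=
  statement12_general p hp lam hlam k
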